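/- Let (u, b, p) be a smooth solution of the perturbed MHD system on [0,T] × 𝕋². Define ũ₁(t,x₁,x₂) = u₁(t,x₁,−x₂), ũ₂(t,x₁,x₂) = −u₂(t,x₁,−x₂), b̃₁(t,x₁,x₂) = −b₁(t,x₁,−x₂), b̃₂(t,x₁,x₂) = b₂(t,x₁,−x₂), and p̃(t,x₁,x₂) = p(t,x₁,−x₂). Then (ũ, b̃, p̃) is also a smooth solution of the same perturbed MHD system on [0,T] × 𝕋², whose initial data are the corresponding reflections of the initial data of (u, b). -/

import Mathlib

open Real MeasureTheory

noncomputable section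

/-- Partial derivative in the first variable. -/
def pd1 (f : ℝ × ℝ → ℝ) : ℝ × ℝ → ℝ := fun p => deriv (fun x => f (x, p.2)) p.1

/-- Partial derivative in the second variable. -/
def pd2 (f : ℝ × ℝ → ℝ) : ℝ × ℝ → ℝ := fun p => deriv (fun y => f (p.1, y)) p.2

/-- Mixed partial derivative `∂₁^a ∂₂^b`. -/
def pdm (a b : ℕ) (f : ℝ × ℝ → ℝ) : ℝ × ℝ → ℝ := pd1^[a] (pd2^[b] f)

/-- Fundamental domain `[-π, π]²` of the torus `𝕋²`. -/
def Torus2 : Set (ℝ × ℝ) := Set.Icc (-π) π ×ˢ Set.Icc (-π) π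

/-- `f` is `2π`-periodic in each variable (i.e. a function on `𝕋²`). -/
def DoublyPeriodic (f : ℝ × ℝ → ℝ) : Prop :=
  ∀ x y : ℝ, f (x + 2 * π, y) = f (x, y) ∧ f (x, y + 2 * π) = f (x, y)

/-- Square of the `L²(𝕋²)` norm. -/
def L2sq (f : ℝ × ℝ → ℝ) : ℝ := ∫ p in Torus2, (f p) ^ 2

/-- Square of the Sobolev `H^k(𝕋²)` norm: sum over all multi-indices `|α| ≤ k`. -/
def SobNormSq (k : ℕ) (f : ℝ × ℝ → ℝ) : ℝ :=
  ∑ a ∈ Finset.range (k + 1), ∑ b ∈ Finset.range (k + 1 - a), L2sq (pdm a b f)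

/-- The Sobolev `H^k(𝕋²)` norm of a scalar function. -/
def SobNorm (k : ℕ) (f : ℝ × ℝ → ℝ) : ℝ := Real.sqrt (SobNormSq k f)

def comp1 (v : ℝ × ℝ → ℝ × ℝ) : ℝ × ℝ → ℝ := fun p => (v p).1

def comp2 (v : ℝ × ℝ → ℝ × ℝ) : ℝ × ℝ → ℝ := fun p => (v p).2

/-- The Sobolev `H^k(𝕋²)` norm of a vector field. -/
def SobNormVec (k : ℕ) (v : ℝ × ℝ → ℝ × ℝ) : ℝ :=
  Real.sqrt (SobNormSq k (comp1 v) + SobNormSq k (comp2 v))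

/-- `∂₂` of a vector field, componentwise. -/
def pd2Vec (v : ℝ × ℝ → ℝ × ℝ) : ℝ × ℝ → ℝ × ℝ :=
  fun p => (pd2 (comp1 v) p, pd2 (comp2 v) p)

/-- The Sobolev `H^k(𝕋²)` norm of the gradient `∇v` (all four first-order partials). -/
def GradSobNorm (k : ℕ) (v : ℝ × ℝ → ℝ × ℝ) : ℝ :=
  Real.sqrt (SobNormSq k (pd1 (comp1 v)) + SobNormSq k (pd2 (comp1 v)) +
    SobNormSq k (pd1 (comp2 v)) + SobNormSq k (pd2 (comp2 v)))

/-- `∇ · v = 0`. -/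
def DivFree (v : ℝ × ℝ → ℝ × ℝ) : Prop := ∀ p, pd1 (comp1 v) p + pd2 (comp2 v) p = 0

def VecPeriodic (v : ℝ × ℝ → ℝ × ℝ) : Prop :=
  DoublyPeriodic (comp1 v) ∧ DoublyPeriodic (comp2 v)

/-- One entry of the tensor `∇^m f` of all `m`-th order partial derivatives:
the entry indexed by `idx : Fin m → Fin 2` (partials commute for smooth `f`). -/
def Dm {m : ℕ} (idx : Fin m → Fin 2) (f : ℝ × ℝ → ℝ) : ℝ × ℝ → ℝ :=
  pdm (Finset.univ.filter fun i => idx i = 0).card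
      (Finset.univ.filter fun i => idx i = 1).card f

/-- The advection operator `v · ∇ f` for a scalar `f`. -/
def advect (v : ℝ × ℝ → ℝ × ℝ) (f : ℝ × ℝ → ℝ) : ℝ × ℝ → ℝ :=
  fun p => (v p).1 * pd1 f p + (v p).2 * pd2 f p

/-- The `j`-th component of a vector field. -/
def vcomp (v : ℝ × ℝ → ℝ × ℝ) (j : Fin 2) : ℝ × ℝ → ℝ :=
  if j = 0 then comp1 v else comp2 v

/-- The Laplacian of a scalar function. -/
def lap (f : ℝ × ℝ → ℝ) : ℝ × ℝ → ℝ := fun p => pd1 (pd1 f) p + pd2 (pd2 f) p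

/-- The `j`-th component of the gradient of a scalar function. -/
def pdj (j : Fin 2) (f : ℝ × ℝ → ℝ) : ℝ × ℝ → ℝ := if j = 0 then pd1 f else pd2 f

/-- A smooth solution `(u, b, p)` of the perturbed MHD system
`∂ₜb + u·∇b − Δb = b·∇u + ∂₂u`, `∂ₜu + u·∇u + ∇p = b·∇b + ∂₂b`, `∇·u = ∇·b = 0`
on `[0,T] × 𝕋²`. -/
structure PerturbedMHDSolution (T : ℝ) (u b : ℝ → ℝ × ℝ → ℝ × ℝ)
    (pr : ℝ → ℝ × ℝ → ℝ) : Prop where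
  smooth_u : ContDiff ℝ (⊤ : ℕ∞) (fun q : ℝ × (ℝ × ℝ) => u q.1 q.2)
  smooth_b : ContDiff ℝ (⊤ : ℕ∞) (fun q : ℝ × (ℝ × ℝ) => b q.1 q.2)
  smooth_p : ContDiff ℝ (⊤ : ℕ∞) (fun q : ℝ × (ℝ × ℝ) => pr q.1 q.2)
  periodic_u : ∀ t : ℝ, VecPeriodic (u t)
  periodic_b : ∀ t : ℝ, VecPeriodic (b t)
  periodic_p : ∀ t : ℝ, DoublyPeriodic (pr t)
  divfree_u : ∀ t ∈ Set.Icc 0 T, DivFree (u t)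
  divfree_b : ∀ t ∈ Set.Icc 0 T, DivFree (b t)
  eq_b : ∀ t ∈ Set.Icc 0 T, ∀ x : ℝ × ℝ, ∀ j : Fin 2,
    deriv (fun s => vcomp (b s) j x) t + advect (u t) (vcomp (b t) j) x
      - lap (vcomp (b t) j) x
      = advect (b t) (vcomp (u t) j) x + pd2 (vcomp (u t) j) x
  eq_u : ∀ t ∈ Set.Icc 0 T, ∀ x : ℝ × ℝ, ∀ j : Fin 2,
    deriv (fun s => vcomp (u s) j x) t + advect (u t) (vcomp (u t) j) x
      + pdj j (pr t) x
      = advect (b t) (vcomp (b t) j) x + pd2 (vcomp (b t) j) x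


/-! ### Auxiliary reflection lemmas -/

/-- Even reflection in the second variable. -/
def Rfl (f : ℝ × ℝ → ℝ) : ℝ × ℝ → ℝ := fun p => f (p.1, -p.2)

/-- Odd reflection in the second variable. -/
def NRfl (f : ℝ × ℝ → ℝ) : ℝ × ℝ → ℝ := fun p => -f (p.1, -p.2)

/-- Reflection of a velocity-type vector field. -/
def uRef (v : ℝ × ℝ → ℝ × ℝ) : ℝ × ℝ → ℝ × ℝ :=
  fun q => ((v (q.1, -q.2)).1, -(v (q.1, -q.2)).2)

/-- Reflection of a magnetic-type vector field. -/
def bRef (v : ℝ × ℝ → ℝ × ℝ) : ℝ × ℝ → ℝ × ℝ :=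
  fun q => (-(v (q.1, -q.2)).1, (v (q.1, -q.2)).2)

lemma pd1_Rfl (f : ℝ × ℝ → ℝ) : pd1 (Rfl f) = Rfl (pd1 f) := rfl

lemma pd1_NRfl (f : ℝ × ℝ → ℝ) : pd1 (NRfl f) = NRfl (pd1 f) := by
  funext p
  show deriv (fun x => -f (x, -p.2)) p.1 = -deriv (fun x => f (x, -p.2)) p.1
  exact deriv.neg

lemma pd2_Rfl (f : ℝ × ℝ → ℝ) : pd2 (Rfl f) = NRfl (pd2 f) := by
  funext p
  show deriv (fun y => f (p.1, -y)) p.2 = -deriv (fun y => f (p.1, y)) (-p.2)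
  exact deriv_comp_neg (fun y => f (p.1, y)) p.2

lemma pd2_NRfl (f : ℝ × ℝ → ℝ) : pd2 (NRfl f) = Rfl (pd2 f) := by
  funext p
  show deriv (fun y => -f (p.1, -y)) p.2 = deriv (fun y => f (p.1, y)) (-p.2)
  rw [deriv.fun_neg, deriv_comp_neg (fun y => f (p.1, y)) p.2, neg_neg]

lemma lap_Rfl (f : ℝ × ℝ → ℝ) : lap (Rfl f) = Rfl (lap f) := by
  funext p
  show pd1 (pd1 (Rfl f)) p + pd2 (pd2 (Rfl f)) p = lap f (p.1, -p.2)
  rw [pd1_Rfl, pd1_Rfl, pd2_Rfl, pd2_NRfl]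
  rfl

lemma lap_NRfl (f : ℝ × ℝ → ℝ) : lap (NRfl f) = NRfl (lap f) := by
  funext p
  show pd1 (pd1 (NRfl f)) p + pd2 (pd2 (NRfl f)) p = -lap f (p.1, -p.2)
  rw [pd1_NRfl, pd1_NRfl, pd2_NRfl, pd2_Rfl]
  show -pd1 (pd1 f) (p.1, -p.2) + -pd2 (pd2 f) (p.1, -p.2)
      = -(pd1 (pd1 f) (p.1, -p.2) + pd2 (pd2 f) (p.1, -p.2))
  ring

lemma advect_uRef_Rfl (v : ℝ × ℝ → ℝ × ℝ) (f : ℝ × ℝ → ℝ) :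
    advect (uRef v) (Rfl f) = Rfl (advect v f) := by
  funext p
  show (v (p.1, -p.2)).1 * pd1 (Rfl f) p + (-(v (p.1, -p.2)).2) * pd2 (Rfl f) p
      = advect v f (p.1, -p.2)
  rw [pd1_Rfl, pd2_Rfl]
  simp only [advect, Rfl, NRfl]
  ring

lemma advect_uRef_NRfl (v : ℝ × ℝ → ℝ × ℝ) (f : ℝ × ℝ → ℝ) :
    advect (uRef v) (NRfl f) = NRfl (advect v f) := by
  funext p
  show (v (p.1, -p.2)).1 * pd1 (NRfl f) p + (-(v (p.1, -p.2)).2) * pd2 (NRfl f) p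
      = -advect v f (p.1, -p.2)
  rw [pd1_NRfl, pd2_NRfl]
  simp only [advect, Rfl, NRfl]
  ring

lemma advect_bRef_Rfl (v : ℝ × ℝ → ℝ × ℝ) (f : ℝ × ℝ → ℝ) :
    advect (bRef v) (Rfl f) = NRfl (advect v f) := by
  funext p
  show (-(v (p.1, -p.2)).1) * pd1 (Rfl f) p + (v (p.1, -p.2)).2 * pd2 (Rfl f) p
      = -advect v f (p.1, -p.2)
  rw [pd1_Rfl, pd2_Rfl]
  simp only [advect, Rfl, NRfl]
  ring

lemma advect_bRef_NRfl (v : ℝ × ℝ → ℝ × ℝ) (f : ℝ × ℝ → ℝ) :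
    advect (bRef v) (NRfl f) = Rfl (advect v f) := by
  funext p
  show (-(v (p.1, -p.2)).1) * pd1 (NRfl f) p + (v (p.1, -p.2)).2 * pd2 (NRfl f) p
      = advect v f (p.1, -p.2)
  rw [pd1_NRfl, pd2_NRfl]
  simp only [advect, Rfl, NRfl]
  ring

lemma DP_Rfl {g : ℝ × ℝ → ℝ} (hg : DoublyPeriodic g) : DoublyPeriodic (Rfl g) := by
  intro x y
  refine ⟨(hg x (-y)).1, ?_⟩
  have h2 := (hg x (-(y + 2 * π))).2
  show g (x, -(y + 2 * π)) = g (x, -y)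
  rw [show -(y + 2 * π) + 2 * π = -y by ring] at h2
  exact h2.symm

lemma DP_NRfl {g : ℝ × ℝ → ℝ} (hg : DoublyPeriodic g) : DoublyPeriodic (NRfl g) := by
  intro x y
  exact ⟨by show -(Rfl g (x + 2 * π, y)) = -(Rfl g (x, y)); rw [(DP_Rfl hg x y).1],
         by show -(Rfl g (x, y + 2 * π)) = -(Rfl g (x, y)); rw [(DP_Rfl hg x y).2]⟩

/-- **Remark 1.2.** If `(u, b, p)` is a smooth solution of the perturbed MHD system on
`[0,T] × 𝕋²`, then its reflection
`ũ₁(t,x₁,x₂) = u₁(t,x₁,−x₂)`, `ũ₂(t,x₁,x₂) = −u₂(t,x₁,−x₂)`,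
`b̃₁(t,x₁,x₂) = −b₁(t,x₁,−x₂)`, `b̃₂(t,x₁,x₂) = b₂(t,x₁,−x₂)`,
`p̃(t,x₁,x₂) = p(t,x₁,−x₂)` is also a smooth solution, whose initial data are the
corresponding reflections of the initial data of `(u, b)`. -/
theorem reflected_solution_is_solution
    (T : ℝ) (u b : ℝ → ℝ × ℝ → ℝ × ℝ) (pr : ℝ → ℝ × ℝ → ℝ)
    (h : PerturbedMHDSolution T u b pr) :
    PerturbedMHDSolution T
      (fun t q => ((u t (q.1, -q.2)).1, -(u t (q.1, -q.2)).2))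
      (fun t q => (-(b t (q.1, -q.2)).1, (b t (q.1, -q.2)).2))
      (fun t q => pr t (q.1, -q.2)) ∧
    (∀ q : ℝ × ℝ,
      (fun t (q : ℝ × ℝ) => ((u t (q.1, -q.2)).1, -(u t (q.1, -q.2)).2)) 0 q
        = ((u 0 (q.1, -q.2)).1, -(u 0 (q.1, -q.2)).2) ∧
      (fun t (q : ℝ × ℝ) => (-(b t (q.1, -q.2)).1, (b t (q.1, -q.2)).2)) 0 q
        = (-(b 0 (q.1, -q.2)).1, (b 0 (q.1, -q.2)).2)) := by
  refine ⟨⟨?_, ?_, ?_, ?_, ?_, ?_, ?_, ?_, ?_, ?_⟩, fun q => ⟨rfl, rfl⟩⟩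
  · -- smooth_u
    have hmap : ContDiff ℝ (⊤ : ℕ∞) (fun q : ℝ × (ℝ × ℝ) => (q.1, (q.2.1, -q.2.2))) := by fun_prop
    have h1 : ContDiff ℝ (⊤ : ℕ∞) (fun q : ℝ × (ℝ × ℝ) => u q.1 (q.2.1, -q.2.2)) :=
      h.smooth_u.comp hmap
    exact h1.fst.prodMk h1.snd.neg
  · -- smooth_b
    have hmap : ContDiff ℝ (⊤ : ℕ∞) (fun q : ℝ × (ℝ × ℝ) => (q.1, (q.2.1, -q.2.2))) := by fun_prop
    have h1 : ContDiff ℝ (⊤ : ℕ∞) (fun q : ℝ × (ℝ × ℝ) => b q.1 (q.2.1, -q.2.2)) :=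
      h.smooth_b.comp hmap
    exact h1.fst.neg.prodMk h1.snd
  · -- smooth_p
    have hmap : ContDiff ℝ (⊤ : ℕ∞) (fun q : ℝ × (ℝ × ℝ) => (q.1, (q.2.1, -q.2.2))) := by fun_prop
    exact h.smooth_p.comp hmap
  · -- periodic_u
    intro t
    exact ⟨DP_Rfl (h.periodic_u t).1, DP_NRfl (h.periodic_u t).2⟩
  · -- periodic_b
    intro t
    exact ⟨DP_NRfl (h.periodic_b t).1, DP_Rfl (h.periodic_b t).2⟩
  · -- periodic_p
    intro t
    exact DP_Rfl (h.periodic_p t)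
  · -- divfree_u
    intro t ht p
    show pd1 (Rfl (comp1 (u t))) p + pd2 (NRfl (comp2 (u t))) p = 0
    rw [pd1_Rfl, pd2_NRfl]
    exact h.divfree_u t ht (p.1, -p.2)
  · -- divfree_b
    intro t ht p
    show pd1 (NRfl (comp1 (b t))) p + pd2 (Rfl (comp2 (b t))) p = 0
    rw [pd1_NRfl, pd2_Rfl]
    have := h.divfree_b t ht (p.1, -p.2)
    show -pd1 (comp1 (b t)) (p.1, -p.2) + -pd2 (comp2 (b t)) (p.1, -p.2) = 0
    linarith
  · -- eq_b
    intro t ht x j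
    fin_cases j
    · show deriv (fun s => NRfl (comp1 (b s)) x) t
          + advect (uRef (u t)) (NRfl (comp1 (b t))) x
          - lap (NRfl (comp1 (b t))) x
          = advect (bRef (b t)) (Rfl (comp1 (u t))) x + pd2 (Rfl (comp1 (u t))) x
      rw [show (fun s => NRfl (comp1 (b s)) x) = (fun s => -(comp1 (b s) (x.1, -x.2)))
            from rfl,
          deriv.fun_neg, advect_uRef_NRfl, lap_NRfl, advect_bRef_Rfl, pd2_Rfl]
      simp only [NRfl]
      have hb := h.eq_b t ht (x.1, -x.2) 0
      simp only [vcomp, pdj, Fin.isValue, reduceIte, one_ne_zero, ite_false] at hb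
      linarith
    · show deriv (fun s => Rfl (comp2 (b s)) x) t
          + advect (uRef (u t)) (Rfl (comp2 (b t))) x
          - lap (Rfl (comp2 (b t))) x
          = advect (bRef (b t)) (NRfl (comp2 (u t))) x + pd2 (NRfl (comp2 (u t))) x
      rw [show (fun s => Rfl (comp2 (b s)) x) = (fun s => comp2 (b s) (x.1, -x.2))
            from rfl,
          advect_uRef_Rfl, lap_Rfl, advect_bRef_NRfl, pd2_NRfl]
      simp only [Rfl]
      have hb := h.eq_b t ht (x.1, -x.2) 1
      simp only [vcomp, pdj, Fin.isValue, reduceIte, one_ne_zero, ite_false] at hb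
      linarith
  · -- eq_u
    intro t ht x j
    fin_cases j
    · show deriv (fun s => Rfl (comp1 (u s)) x) t
          + advect (uRef (u t)) (Rfl (comp1 (u t))) x
          + pd1 (Rfl (pr t)) x
          = advect (bRef (b t)) (NRfl (comp1 (b t))) x + pd2 (NRfl (comp1 (b t))) x
      rw [show (fun s => Rfl (comp1 (u s)) x) = (fun s => comp1 (u s) (x.1, -x.2))
            from rfl,
          advect_uRef_Rfl, pd1_Rfl, advect_bRef_NRfl, pd2_NRfl]
      simp only [Rfl]
      have hu := h.eq_u t ht (x.1, -x.2) 0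
      simp only [vcomp, pdj, Fin.isValue, reduceIte, one_ne_zero, ite_false] at hu
      linarith
    · show deriv (fun s => NRfl (comp2 (u s)) x) t
          + advect (uRef (u t)) (NRfl (comp2 (u t))) x
          + pd2 (Rfl (pr t)) x
          = advect (bRef (b t)) (Rfl (comp2 (b t))) x + pd2 (Rfl (comp2 (b t))) x
      rw [show (fun s => NRfl (comp2 (u s)) x) = (fun s => -(comp2 (u s) (x.1, -x.2)))
            from rfl,
          deriv.fun_neg, advect_uRef_NRfl, pd2_Rfl, advect_bRef_Rfl, pd2_Rfl]
      simp only [Rfl, NRfl]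
      have hu := h.eq_u t ht (x.1, -x.2) 1
      simp only [vcomp, pdj, Fin.isValue, reduceIte, one_ne_zero, ite_false] at hu
      linarith
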